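/- Let f₀, f₁ : [0,1] → ℝ² be continuously differentiable curves with nonvanishing derivative, and let φ : [0,1] → [0,1] be continuously differentiable with φ(0) = 0, φ(1) = 1 and φ'(θ) > 0 for all θ. Then the squared L² distance between square root normal fields is reparametrization invariant: ∫₀¹ ‖ñ_{f₀∘φ}(θ) − ñ_{f₁∘φ}(θ)‖² dθ = ∫₀¹ ‖ñ_{f₀}(θ) − ñ_{f₁}(θ)‖² dθ. -/

import Mathlib

open Set MeasureTheory

noncomputable section

/-- Rotation by 90 degrees in the plane: `J (x, y) = (-y, x)`. -/
def J (v : EuclideanSpace ℝ (Fin 2)) : EuclideanSpace ℝ (Fin 2) := WithLp.toLp 2 ![-v 1, v 0]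

/-- The square root normal field (SRNF) of a planar curve:
`ñ_f θ = J (f' θ) / ‖f' θ‖ ^ (1/2)`. -/
def srnf (f : ℝ → EuclideanSpace ℝ (Fin 2)) (θ : ℝ) : EuclideanSpace ℝ (Fin 2) :=
  (Real.sqrt ‖deriv f θ‖)⁻¹ • J (deriv f θ)

lemma J_smul (c : ℝ) (v : EuclideanSpace ℝ (Fin 2)) : J (c • v) = c • J v := by
  ext i
  fin_cases i <;> simp [J, mul_comm]

lemma J_continuous : Continuous J := by
  unfold J
  fun_prop

lemma srnf_comp (f : ℝ → EuclideanSpace ℝ (Fin 2)) (φ : ℝ → ℝ)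
    (hf : ContDiff ℝ 1 f) (hφ : ContDiff ℝ 1 φ) (θ : ℝ) (hc : 0 ≤ deriv φ θ) :
    srnf (f ∘ φ) θ = Real.sqrt (deriv φ θ) • srnf f (φ θ) := by
  set c := deriv φ θ with hcdef
  have hder : deriv (f ∘ φ) θ = c • deriv f (φ θ) := by
    have hg : HasDerivAt f (deriv f (φ θ)) (φ θ) :=
      ((hf.differentiable one_ne_zero) (φ θ)).hasDerivAt
    have hh : HasDerivAt φ c θ := ((hφ.differentiable one_ne_zero) θ).hasDerivAt
    exact (hg.scomp θ hh).deriv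
  rcases eq_or_lt_of_le hc with h0 | h0
  · simp [srnf, hder, ← h0, J]
  · unfold srnf
    rw [hder, J_smul, norm_smul, Real.norm_of_nonneg hc,
      Real.sqrt_mul hc, smul_smul, smul_smul, mul_inv]
    congr 1
    have hs : Real.sqrt c ≠ 0 := ne_of_gt (Real.sqrt_pos.2 h0)
    rcases eq_or_ne (Real.sqrt ‖deriv f (φ θ)‖) 0 with h | h
    · simp [h]
    · field_simp
      nth_rewrite 1 [← Real.mul_self_sqrt hc]
      ring

lemma srnf_continuousOn (f : ℝ → EuclideanSpace ℝ (Fin 2))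
    (hf : ContDiff ℝ 1 f) (hf' : ∀ θ ∈ Icc (0:ℝ) 1, deriv f θ ≠ 0) :
    ContinuousOn (srnf f) (Icc (0:ℝ) 1) := by
  have hd : Continuous (deriv f) := hf.continuous_deriv le_rfl
  apply ContinuousOn.smul (f := fun θ => (Real.sqrt ‖deriv f θ‖)⁻¹) (g := fun θ => J (deriv f θ))
  · apply ContinuousOn.inv₀
    · exact (Real.continuous_sqrt.comp hd.norm).continuousOn
    · intro θ hθ
      exact ne_of_gt (Real.sqrt_pos.2 (norm_pos_iff.2 (hf' θ hθ)))
  · exact (J_continuous.comp hd).continuousOn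

/-- The squared `L²` distance between SRNFs is reparametrization invariant. -/
theorem srnf_L2_distance_reparametrization_invariant
    (f₀ f₁ : ℝ → EuclideanSpace ℝ (Fin 2)) (φ : ℝ → ℝ)
    (hf₀ : ContDiff ℝ 1 f₀) (hf₀' : ∀ θ ∈ Icc (0:ℝ) 1, deriv f₀ θ ≠ 0)
    (hf₁ : ContDiff ℝ 1 f₁) (hf₁' : ∀ θ ∈ Icc (0:ℝ) 1, deriv f₁ θ ≠ 0)
    (hφ : ContDiff ℝ 1 φ) (hφmaps : MapsTo φ (Icc (0:ℝ) 1) (Icc (0:ℝ) 1))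
    (hφ0 : φ 0 = 0) (hφ1 : φ 1 = 1)
    (hφ' : ∀ θ ∈ Icc (0:ℝ) 1, 0 < deriv φ θ) :
    ∫ θ in (0:ℝ)..1, ‖srnf (f₀ ∘ φ) θ - srnf (f₁ ∘ φ) θ‖ ^ 2
      = ∫ θ in (0:ℝ)..1, ‖srnf f₀ θ - srnf f₁ θ‖ ^ 2 := by
  set g : ℝ → ℝ := fun u => ‖srnf f₀ u - srnf f₁ u‖ ^ 2 with hg
  have huIcc : uIcc (0:ℝ) 1 = Icc (0:ℝ) 1 := uIcc_of_le zero_le_one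
  have key : ∀ θ ∈ uIcc (0:ℝ) 1,
      ‖srnf (f₀ ∘ φ) θ - srnf (f₁ ∘ φ) θ‖ ^ 2 = deriv φ θ • g (φ θ) := by
    intro θ hθ
    rw [huIcc] at hθ
    have hc := (hφ' θ hθ).le
    rw [srnf_comp f₀ φ hf₀ hφ θ hc, srnf_comp f₁ φ hf₁ hφ θ hc, ← smul_sub,
      norm_smul, Real.norm_of_nonneg (Real.sqrt_nonneg _), mul_pow,
      Real.sq_sqrt (hφ' θ hθ).le]
    rfl
  rw [intervalIntegral.integral_congr key]
  have hsub : ∫ θ in (0:ℝ)..1, deriv φ θ • g (φ θ) = ∫ u in (φ 0)..(φ 1), g u := by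
    apply intervalIntegral.integral_comp_smul_deriv' (f := φ) (f' := deriv φ) (g := g)
    · intro x _
      exact ((hφ.differentiable one_ne_zero) x).hasDerivAt
    · exact (hφ.continuous_deriv le_rfl).continuousOn
    · have h1 : ContinuousOn g (Icc (0:ℝ) 1) :=
        ((srnf_continuousOn f₀ hf₀ hf₀').sub (srnf_continuousOn f₁ hf₁ hf₁')).norm.pow 2
      have h2 : φ '' uIcc (0:ℝ) 1 ⊆ Icc (0:ℝ) 1 := by rw [huIcc]; exact hφmaps.image_subset
      exact h1.mono h2
  rw [hsub, hφ0, hφ1]
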